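/- arXiv:2010.07238 — 2 statements merged into one kernel-verified Lean document; each statement's English description precedes it below -/
import Mathlib

section
/- Let E be a finite abelian group and θ : E → V a function into a ℚ-vector space V with θ(0) = 0 and θ(−x) = θ(x) for all x. Fix a, b ∈ E. Then the three sums S₁ = Σ_{s∈E} θ(s) ∧ θ(b−s), S₂ = Σ_{s∈E} θ(a−s) ∧ θ(s), S₃ = Σ_{s∈E} θ(a−s) ∧ θ(b−s), taken in the exterior square V ∧ V, satisfy S₁ + S₂ + S₃ = 0. -/
open ExteriorAlgebra

lemma aux_sum_wedge_zero
    {E : Type*} [AddCommGroup E] [Fintype E]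
    {V : Type*} [AddCommGroup V] [Module ℚ V]
    (θ : E → V) (hneg : ∀ x, θ (-x) = θ x) (c d : E) :
    (∑ s : E, ι (R := ℚ) (θ (c - s)) * ι (R := ℚ) (θ (d - s))) = 0 := by
  have key : (∑ s : E, ι (R := ℚ) (θ (c - s)) * ι (R := ℚ) (θ (d - s)))
      = ∑ s : E, ι (R := ℚ) (θ (d - s)) * ι (R := ℚ) (θ (c - s)) := by
    refine Fintype.sum_equiv (Equiv.subLeft (c + d)) _ _ fun s => ?_
    have h1 : c - (c + d - s) = -(d - s) := by abel
    have h2 : d - (c + d - s) = -(c - s) := by abel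
    simp only [Equiv.subLeft_apply]
    rw [h1, h2, hneg, hneg]
  have h2 : (2 : ℚ) • (∑ s : E, ι (R := ℚ) (θ (c - s)) * ι (R := ℚ) (θ (d - s))) = 0 := by
    rw [two_smul]
    nth_rewrite 2 [key]
    rw [← Finset.sum_add_distrib]
    refine Finset.sum_eq_zero fun s _ => ?_
    exact ι_add_mul_swap _ _
  have := smul_eq_zero.mp h2
  simpa using this

/-- Let `E` be a finite abelian group, `V` a `ℚ`-vector space, and `θ : E → V` with
`θ 0 = 0` and `θ (-x) = θ x`.  Then for any `a b ∈ E` the three sums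
`Σ_s θ(s) ∧ θ(b−s)`, `Σ_s θ(a−s) ∧ θ(s)`, `Σ_s θ(a−s) ∧ θ(b−s)` in the exterior
square of `V` add to zero. -/
theorem sum_wedge_three_eq_zero
    {E : Type*} [AddCommGroup E] [Fintype E]
    {V : Type*} [AddCommGroup V] [Module ℚ V]
    (θ : E → V) (h0 : θ 0 = 0) (hneg : ∀ x, θ (-x) = θ x) (a b : E) :
    (∑ s : E, ι (R := ℚ) (θ s) * ι (R := ℚ) (θ (b - s)))
      + (∑ s : E, ι (R := ℚ) (θ (a - s)) * ι (R := ℚ) (θ s))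
      + (∑ s : E, ι (R := ℚ) (θ (a - s)) * ι (R := ℚ) (θ (b - s))) = 0 := by
  have e1 : ∀ s : E, θ s = θ (0 - s) := fun s => by rw [zero_sub, hneg]
  rw [show (∑ s : E, ι (R := ℚ) (θ s) * ι (R := ℚ) (θ (b - s)))
      = ∑ s : E, ι (R := ℚ) (θ (0 - s)) * ι (R := ℚ) (θ (b - s)) from
      Finset.sum_congr rfl fun s _ => by rw [← e1],
    show (∑ s : E, ι (R := ℚ) (θ (a - s)) * ι (R := ℚ) (θ s))
      = ∑ s : E, ι (R := ℚ) (θ (a - s)) * ι (R := ℚ) (θ (0 - s)) from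
      Finset.sum_congr rfl fun s _ => by rw [← e1],
    aux_sum_wedge_zero θ hneg 0 b, aux_sum_wedge_zero θ hneg a 0,
    aux_sum_wedge_zero θ hneg a b]
  simp
end

section
/- Let V be a ℚ-vector space with basis {ω, ω̄} and consider the tensor algebra T(V). Define ρ_p on T(V) (values in T(V ⊕ ℚ·p)) as the signed sum over replacements of non-overlapping adjacent pairs by ⟨ω_i,ω_{i+1}⟩·p, where ⟨ω,ω̄⟩ = 1 = −⟨ω̄,ω⟩ and ⟨ω,ω⟩ = ⟨ω̄,ω̄⟩ = 0. Then ρ_p(S_{m,m'}) = S_{m,m'} for all m, m' ≥ 0, where S_{m,m'} ∈ T(V) is the sum of all distinct words with exactly m letters ω and m' letters ω̄. -/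
/-- Letters: `0 = ω`, `1 = ω̄` in `Fin 2`; in `Fin 3` additionally `2 = p`. -/
def embLetter : Fin 2 → Fin 3 := Fin.castSucc

/-- The skew pairing `⟨ω,ω̄⟩ = 1 = −⟨ω̄,ω⟩`, `⟨ω,ω⟩ = ⟨ω̄,ω̄⟩ = 0`. -/
def skewPairing (a b : Fin 2) : ℚ :=
  if a = 0 ∧ b = 1 then 1 else if a = 1 ∧ b = 0 then -1 else 0

/-- The value of a word in the letters `{ω, ω̄, p}` in the tensor (free) algebra. -/
noncomputable def wordVal (w : List (Fin 3)) : FreeAlgebra ℚ (Fin 3) :=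
  (w.map (FreeAlgebra.ι ℚ)).prod

/-- The map `ρ_p`: the signed sum over all replacements of pairwise non-overlapping
adjacent pairs `(ω_i, ω_{i+1})` by `⟨ω_i, ω_{i+1}⟩ · p`, with sign `(−1)^{#replacements}`. -/
noncomputable def rhoP : List (Fin 2) → FreeAlgebra ℚ (Fin 3)
  | [] => 1
  | [a] => FreeAlgebra.ι ℚ (embLetter a)
  | a :: b :: rest =>
      FreeAlgebra.ι ℚ (embLetter a) * rhoP (b :: rest)
        - skewPairing a b • (FreeAlgebra.ι ℚ 2 * rhoP rest)
  termination_by l => l.length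

/-! ### Auxiliary development -/

/-- The multiset of all distinct words with `m` letters `0` and `m'` letters `1`. -/
def Wms : ℕ → ℕ → Multiset (List (Fin 2))
  | 0, 0 => {[]}
  | m + 1, 0 => (Wms m 0).map (List.cons 0)
  | 0, n + 1 => (Wms 0 n).map (List.cons 1)
  | m + 1, n + 1 => (Wms m (n + 1)).map (List.cons 0) + (Wms (m + 1) n).map (List.cons 1)

lemma Wms00 : Wms 0 0 = {[]} := by rw [Wms]
lemma WmsS0 (m : ℕ) : Wms (m + 1) 0 = (Wms m 0).map (List.cons 0) := by rw [Wms]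
lemma Wms0S (n : ℕ) : Wms 0 (n + 1) = (Wms 0 n).map (List.cons 1) := by rw [Wms]
lemma WmsSS (m n : ℕ) : Wms (m + 1) (n + 1)
    = (Wms m (n + 1)).map (List.cons 0) + (Wms (m + 1) n).map (List.cons 1) := by rw [Wms]

lemma mem_Wms (l : List (Fin 2)) : ∀ m m' : ℕ,
    l ∈ Wms m m' ↔ l.count 0 = m ∧ l.count 1 = m' := by
  induction l with
  | nil =>
    intro m m'
    rcases m with _ | M <;> rcases m' with _ | N <;> simp [Wms]
  | cons a t ih =>
    intro m m'
    fin_cases a <;> rcases m with _ | M <;> rcases m' with _ | N <;>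
      simp [Wms, ih, List.count_cons]

lemma nodup_Wms : ∀ m m' : ℕ, (Wms m m').Nodup
  | 0, 0 => by simp [Wms00]
  | m + 1, 0 => by
    rw [WmsS0]; exact (nodup_Wms m 0).map List.cons_injective
  | 0, n + 1 => by
    rw [Wms0S]; exact (nodup_Wms 0 n).map List.cons_injective
  | m + 1, n + 1 => by
    rw [WmsSS, Multiset.nodup_add]
    refine ⟨(nodup_Wms m (n + 1)).map List.cons_injective,
      (nodup_Wms (m + 1) n).map List.cons_injective, ?_⟩
    rw [Multiset.disjoint_left]
    rintro l h1 h2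
    rw [Multiset.mem_map] at h1 h2
    obtain ⟨x, -, hx⟩ := h1
    obtain ⟨y, -, hy⟩ := h2
    rw [← hy] at hx
    exact absurd (List.head_eq_of_cons_eq hx) (by decide)

/-- Sum of `rhoP` over all distinct words with given letter counts. -/
noncomputable def Tsum (m m' : ℕ) : FreeAlgebra ℚ (Fin 3) := ((Wms m m').map rhoP).sum

/-- Sum of `wordVal` over all distinct words with given letter counts. -/
noncomputable def Vsum (m m' : ℕ) : FreeAlgebra ℚ (Fin 3) :=
  ((Wms m m').map (fun l : List (Fin 2) => wordVal (l.map embLetter))).sum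

/-- Correction term coming from words starting with the letter `1`. -/
noncomputable def Corr0 (m m' : ℕ) : FreeAlgebra ℚ (Fin 3) :=
  match m' with
  | 0 => 0
  | n + 1 => FreeAlgebra.ι ℚ 2 * Tsum m n

/-- Correction term coming from words starting with the letter `0`. -/
noncomputable def Corr1 (m m' : ℕ) : FreeAlgebra ℚ (Fin 3) :=
  match m with
  | 0 => 0
  | M + 1 => FreeAlgebra.ι ℚ 2 * Tsum M m'

lemma sum_map_smul (s : Multiset (List (Fin 2))) (f : List (Fin 2) → FreeAlgebra ℚ (Fin 3))
    (c : ℚ) : (s.map (fun i => c • f i)).sum = c • (s.map f).sum := by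
  rw [Multiset.smul_sum, Multiset.map_map]; rfl

lemma rhoP_cons_cons (a b : Fin 2) :
    (fun t => rhoP (a :: b :: t)) = fun t =>
      FreeAlgebra.ι ℚ (embLetter a) * rhoP (b :: t)
        - skewPairing a b • (FreeAlgebra.ι ℚ 2 * rhoP t) :=
  funext fun t => by rw [rhoP]

lemma rhoP_nil : rhoP [] = 1 := by rw [rhoP]
lemma rhoP_single (a : Fin 2) : rhoP [a] = FreeAlgebra.ι ℚ (embLetter a) := by rw [rhoP]

lemma skew00 : skewPairing 0 0 = 0 := by decide
lemma skew01 : skewPairing 0 1 = 1 := by decide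
lemma skew10 : skewPairing 1 0 = -1 := by decide
lemma skew11 : skewPairing 1 1 = 0 := by decide

/-- Key computation: summing `rhoP (0 :: t)` over all words `t` with given counts. -/
lemma sum_rhoP_cons0 (m m' : ℕ) :
    ((Wms m m').map (fun t => rhoP (0 :: t))).sum
      = FreeAlgebra.ι ℚ (embLetter 0) * Tsum m m' - Corr0 m m' := by
  rcases m with _ | M <;> rcases m' with _ | N
  · simp [Tsum, Wms00, Corr0, rhoP_nil, rhoP_single]
  · simp only [Tsum, Corr0, Wms0S, Multiset.map_map, Function.comp_def,
      rhoP_cons_cons 0 1, Multiset.sum_map_sub, Multiset.sum_map_mul_left, sum_map_smul,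
      skew01, one_smul]
  · simp only [Tsum, Corr0, WmsS0, Multiset.map_map, Function.comp_def,
      rhoP_cons_cons 0 0, Multiset.sum_map_sub, Multiset.sum_map_mul_left, sum_map_smul,
      skew00, zero_smul, sub_zero]
  · simp only [Tsum, Corr0, WmsSS, Multiset.map_add, Multiset.sum_add, Multiset.map_map,
      Function.comp_def, rhoP_cons_cons 0 0, rhoP_cons_cons 0 1, Multiset.sum_map_sub,
      Multiset.sum_map_mul_left, sum_map_smul, skew00, skew01, zero_smul, one_smul,
      sub_zero, mul_add]
    abel

/-- Key computation: summing `rhoP (1 :: t)` over all words `t` with given counts. -/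
lemma sum_rhoP_cons1 (m m' : ℕ) :
    ((Wms m m').map (fun t => rhoP (1 :: t))).sum
      = FreeAlgebra.ι ℚ (embLetter 1) * Tsum m m' + Corr1 m m' := by
  rcases m with _ | M <;> rcases m' with _ | N
  · simp [Tsum, Wms00, Corr1, rhoP_nil, rhoP_single]
  · simp only [Tsum, Corr1, Wms0S, Multiset.map_map, Function.comp_def,
      rhoP_cons_cons 1 1, Multiset.sum_map_sub, Multiset.sum_map_mul_left, sum_map_smul,
      skew11, zero_smul, sub_zero, add_zero]
  · simp only [Tsum, Corr1, WmsS0, Multiset.map_map, Function.comp_def,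
      rhoP_cons_cons 1 0, Multiset.sum_map_sub, Multiset.sum_map_mul_left, sum_map_smul,
      skew10, neg_smul, one_smul, sub_neg_eq_add, Multiset.sum_map_add]
  · simp only [Tsum, Corr1, WmsSS, Multiset.map_add, Multiset.sum_add, Multiset.map_map,
      Function.comp_def, rhoP_cons_cons 1 0, rhoP_cons_cons 1 1, Multiset.sum_map_sub,
      Multiset.sum_map_mul_left, sum_map_smul, skew10, skew11, zero_smul, neg_smul,
      one_smul, sub_zero, sub_neg_eq_add, Multiset.sum_map_add, mul_add]
    abel

lemma wordVal_cons (a : Fin 2) (t : List (Fin 2)) :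
    wordVal ((a :: t).map embLetter)
      = FreeAlgebra.ι ℚ (embLetter a) * wordVal (t.map embLetter) := by
  simp [wordVal]

lemma Vsum_cons (a : Fin 2) (m m' : ℕ) :
    (((Wms m m').map (List.cons a)).map
        (fun l : List (Fin 2) => wordVal (l.map embLetter))).sum
      = FreeAlgebra.ι ℚ (embLetter a) * Vsum m m' := by
  rw [Multiset.map_map]
  simp only [Function.comp_def, wordVal_cons]
  rw [Multiset.sum_map_mul_left]
  rfl

lemma Tsum_eq_Vsum : ∀ m m' : ℕ, Tsum m m' = Vsum m m'
  | 0, 0 => by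
    simp [Tsum, Vsum, Wms00, rhoP_nil, wordVal]
  | M + 1, 0 => by
    have hT : Tsum (M + 1) 0 = ((Wms M 0).map (fun t => rhoP (0 :: t))).sum := by
      rw [Tsum, WmsS0, Multiset.map_map]; rfl
    have hV : Vsum (M + 1) 0 = FreeAlgebra.ι ℚ (embLetter 0) * Vsum M 0 := by
      rw [Vsum, WmsS0, Vsum_cons]
    have hC : Corr0 M 0 = 0 := rfl
    rw [hT, sum_rhoP_cons0 M 0, hV, hC, Tsum_eq_Vsum M 0, sub_zero]
  | 0, N + 1 => by
    have hT : Tsum 0 (N + 1) = ((Wms 0 N).map (fun t => rhoP (1 :: t))).sum := by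
      rw [Tsum, Wms0S, Multiset.map_map]; rfl
    have hV : Vsum 0 (N + 1) = FreeAlgebra.ι ℚ (embLetter 1) * Vsum 0 N := by
      rw [Vsum, Wms0S, Vsum_cons]
    have hC : Corr1 0 N = 0 := rfl
    rw [hT, sum_rhoP_cons1 0 N, hV, hC, Tsum_eq_Vsum 0 N, add_zero]
  | M + 1, N + 1 => by
    have hT : Tsum (M + 1) (N + 1)
        = ((Wms M (N + 1)).map (fun t => rhoP (0 :: t))).sum
          + ((Wms (M + 1) N).map (fun t => rhoP (1 :: t))).sum := by
      rw [Tsum, WmsSS, Multiset.map_add, Multiset.sum_add, Multiset.map_map,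
        Multiset.map_map]; rfl
    have hV : Vsum (M + 1) (N + 1)
        = FreeAlgebra.ι ℚ (embLetter 0) * Vsum M (N + 1)
          + FreeAlgebra.ι ℚ (embLetter 1) * Vsum (M + 1) N := by
      rw [Vsum, WmsSS, Multiset.map_add, Multiset.sum_add, Vsum_cons, Vsum_cons]
    have hC0 : Corr0 M (N + 1) = FreeAlgebra.ι ℚ 2 * Tsum M N := rfl
    have hC1 : Corr1 (M + 1) N = FreeAlgebra.ι ℚ 2 * Tsum M N := rfl
    rw [hT, sum_rhoP_cons0 M (N + 1), sum_rhoP_cons1 (M + 1) N, hV, hC0, hC1,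
      Tsum_eq_Vsum M (N + 1), Tsum_eq_Vsum (M + 1) N]
    abel

lemma coe_dedup_perms (m m' : ℕ) :
    (((List.replicate m (0 : Fin 2) ++ List.replicate m' 1).permutations.dedup : List _) :
      Multiset (List (Fin 2))) = Wms m m' := by
  rw [Multiset.Nodup.ext (by exact_mod_cast List.nodup_dedup _) (nodup_Wms m m')]
  intro l
  rw [Multiset.mem_coe, List.mem_dedup, List.mem_permutations, mem_Wms,
    List.perm_iff_count, Fin.forall_fin_two]
  simp [List.count_replicate]

/-- `ρ_p(S_{m,m'}) = S_{m,m'}`: the map `ρ_p` fixes the sum `S_{m,m'}` of all distinct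
words with `m` letters `ω` and `m'` letters `ω̄`. -/
theorem rhoP_fixes_symmetric_words (m m' : ℕ) :
    (((List.replicate m (0 : Fin 2) ++ List.replicate m' 1).permutations.dedup).map
        rhoP).sum
      = (((List.replicate m (0 : Fin 2) ++ List.replicate m' 1).permutations.dedup).map
          (fun l : List (Fin 2) => wordVal (l.map embLetter))).sum := by
  have key := Tsum_eq_Vsum m m'
  rw [Tsum, Vsum, ← coe_dedup_perms m m'] at key
  simpa using key
end
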